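/- Let C be a conformal Lie algebra (vertex Lie algebra) with translation operator T and products u_n v for n ≥ 0. In the coefficient Lie algebra Ĉ = (C ⊗ ℂ[t,t^{-1}])/Im(T⊗1 + 1⊗d/dt), with bracket [u(m), v(n)] = ∑_{k≥0} C(m,k) (u_k v)(m+n−k), the subspaces Ĉ^− = span{u(m) : u ∈ C, m < 0} and Ĉ^+ = span{u(m) : u ∈ C, m ≥ 0} are Lie subalgebras, and Ĉ = Ĉ^− ⊕ Ĉ^+ as vector spaces. -/

import Mathlib

noncomputable section

/-- Generalized binomial coefficient `C(m,j)` for `m : ℤ`. -/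
def cchoose (m : ℤ) (j : ℕ) : ℂ :=
  (∏ t ∈ Finset.range j, ((m : ℂ) - (t : ℂ))) / (j.factorial : ℂ)

variable (C : Type*) [AddCommGroup C] [Module ℂ C] (T : C →ₗ[ℂ] C)

/-- The image of `T ⊗ 1 + 1 ⊗ d/dt` in `C ⊗ ℂ[t,t⁻¹] ≅ (ℤ →₀ C)`:
the span of the elements `(Tu)⊗t^m + m·u⊗t^{m-1}`. -/
def ImD : Submodule ℂ (ℤ →₀ C) :=
  Submodule.span ℂ {x : ℤ →₀ C | ∃ (u : C) (m : ℤ),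
    x = Finsupp.single m (T u) + (m : ℂ) • Finsupp.single (m - 1) u}

/-- The coefficient space `Ĉ = (C ⊗ ℂ[t,t⁻¹]) / Im(T⊗1 + 1⊗d/dt)`. -/
abbrev Chat := (ℤ →₀ C) ⧸ ImD C T

/-- `u(m)`, the image of `u ⊗ t^m` in `Ĉ`. -/
def elt (u : C) (m : ℤ) : Chat C T :=
  Submodule.Quotient.mk (Finsupp.single m u)

/-- `Ĉ⁻ = span{u(m) : m < 0}`. -/
def ChatNeg : Submodule ℂ (Chat C T) :=
  Submodule.span ℂ {x | ∃ (u : C) (m : ℤ), m < 0 ∧ x = elt C T u m}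

/-- `Ĉ⁺ = span{u(m) : m ≥ 0}`. -/
def ChatPos : Submodule ℂ (Chat C T) :=
  Submodule.span ℂ {x | ∃ (u : C) (m : ℤ), 0 ≤ m ∧ x = elt C T u m}

theorem cchoose_eq_zero_of_lt {m : ℤ} (hm : 0 ≤ m) {k : ℕ} (hk : m < k) : cchoose m k = 0 := by
  have hfactor : ((m.toNat : ℕ) : ℂ) = m := by exact_mod_cast Int.toNat_of_nonneg hm
  rw [cchoose, Finset.prod_eq_zero (Finset.mem_range.2 (by omega : m.toNat < k))
    (by rw [hfactor, sub_self]), zero_div]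

namespace Submodule

theorem apply_mem_of_forall_mem_span {R M N P : Type*} [CommSemiring R] [AddCommMonoid M]
    [AddCommMonoid N] [AddCommMonoid P] [Module R M] [Module R N] [Module R P]
    {f : M →ₗ[R] N →ₗ[R] P} {s : Set M} {t : Set N}
    {p : Submodule R P} (h : ∀ x ∈ s, ∀ y ∈ t, f x y ∈ p) :
    ∀ x ∈ span R s, ∀ y ∈ span R t, f x y ∈ p :=
  map₂_le.1 <| (map₂_span_span R f s t).le.trans <| span_le.2 <| Set.image2_subset_iff.2 h

/-- The generators split `span R S` as `(span R S ⊓ A) ⊔ (span R S ⊓ B)`; if `a - b` lies in it,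
removing its `A`-part from `a` leaves an element of `A ⊓ B = ⊥`. -/
theorem disjoint_map_mkQ_span {R M : Type*} [Ring R] [AddCommGroup M] [Module R M] {S : Set M} {A B : Submodule R M} (hAB : Disjoint A B)
    (hS : ∀ s ∈ S, s ∈ A ∨ s ∈ B) :
    Disjoint (A.map (span R S).mkQ) (B.map (span R S).mkQ) := by
  have hsplit : span R S ≤ (span R S ⊓ A) ⊔ (span R S ⊓ B) := span_le.2 fun s hs =>
    (hS s hs).elim (fun hA => mem_sup_left ⟨subset_span hs, hA⟩)
      (fun hB => mem_sup_right ⟨subset_span hs, hB⟩)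
  rw [disjoint_def]
  rintro _ ⟨a, ha, rfl⟩ ⟨b, hb, hba⟩
  obtain ⟨ka, ⟨hkaS, hkaA⟩, kb, ⟨-, hkbB⟩, hk⟩ :=
    mem_sup.1 (hsplit ((Quotient.eq _).1 hba.symm))
  have hzero : a - ka = 0 := disjoint_def.1 hAB _ (sub_mem ha hkaA)
    (by convert add_mem hb hkbB using 1; rw [← sub_eq_iff_eq_add'.2 hk.symm]; abel)
  rw [sub_eq_zero.1 hzero, mkQ_apply, Quotient.mk_eq_zero]
  exact hkaS

end Submodule

open Finsupp Set

theorem span_elt_eq_map_supported (s : Set ℤ) :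
    Submodule.span ℂ {x | ∃ (u : C) (m : ℤ), m ∈ s ∧ x = elt C T u m} =
      (supported C ℂ s).map (ImD C T).mkQ := by
  apply le_antisymm
  · rw [Submodule.span_le]
    rintro _ ⟨u, m, hm, rfl⟩
    exact ⟨single m u, single_mem_supported ℂ u hm, rfl⟩
  · rintro _ ⟨f, hf, rfl⟩
    rw [← sum_single f, Finsupp.sum, map_sum]
    exact Submodule.sum_mem _ fun m hm =>
      Submodule.subset_span ⟨f m, m, (mem_supported ℂ f).1 hf hm, rfl⟩

theorem chatNeg_eq_map_supported :
    ChatNeg C T = (supported C ℂ (Iio 0)).map (ImD C T).mkQ :=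
  span_elt_eq_map_supported C T _

theorem chatPos_eq_map_supported :
    ChatPos C T = (supported C ℂ (Ici 0)).map (ImD C T).mkQ :=
  span_elt_eq_map_supported C T _

/-- The two terms of a generator of `ImD` sit in degrees `m` and `m - 1`, which straddle `0`
only for `m = 0`, where the second term has coefficient `0`. -/
theorem imD_generator_mem_supported (u : C) (m : ℤ) :
    single m (T u) + (m : ℂ) • single (m - 1) u ∈ supported C ℂ (Iio 0) ∨
      single m (T u) + (m : ℂ) • single (m - 1) u ∈ supported C ℂ (Ici 0) := by
  rcases lt_trichotomy m 0 with hm | rfl | hm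
  · exact .inl <| add_mem (single_mem_supported ℂ _ hm)
      (Submodule.smul_mem _ _ (single_mem_supported ℂ _ (by simp; omega)))
  · exact .inr <| by simpa using single_mem_supported ℂ (T u) (self_mem_Ici : (0 : ℤ) ∈ Ici 0)
  · exact .inr <| add_mem (single_mem_supported ℂ _ hm.le)
      (Submodule.smul_mem _ _ (single_mem_supported ℂ _ (by simp; omega)))

theorem chatNeg_sup_chatPos : ChatNeg C T ⊔ ChatPos C T = ⊤ := by
  rw [chatNeg_eq_map_supported, chatPos_eq_map_supported, ← Submodule.map_sup,
    ← supported_union, Iio_union_Ici, supported_univ, Submodule.map_top, Submodule.range_mkQ]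

theorem disjoint_chatNeg_chatPos : Disjoint (ChatNeg C T) (ChatPos C T) := by
  rw [chatNeg_eq_map_supported, chatPos_eq_map_supported]
  refine Submodule.disjoint_map_mkQ_span
    (disjoint_supported_supported (Iio_disjoint_Ici le_rfl)) ?_
  rintro _ ⟨u, m, rfl⟩
  exact imD_generator_mem_supported C T u m

section Bracket

variable {C T} {nprod : ℕ → C → C → C} {Nb : C → C → ℕ}
  {B : Chat C T →ₗ[ℂ] Chat C T →ₗ[ℂ] Chat C T}

theorem apply_mem_chatNeg
    (hB : ∀ (u v : C) (m n : ℤ), B (elt C T u m) (elt C T v n)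
      = ∑ k ∈ Finset.range (Nb u v), cchoose m k • elt C T (nprod k u v) (m + n - (k : ℤ))) :
    ∀ x ∈ ChatNeg C T, ∀ y ∈ ChatNeg C T, B x y ∈ ChatNeg C T := by
  refine Submodule.apply_mem_of_forall_mem_span ?_
  rintro _ ⟨u, m, hm, rfl⟩ _ ⟨v, n, hn, rfl⟩
  rw [hB]
  exact Submodule.sum_mem _ fun k _ => Submodule.smul_mem _ _ <|
    Submodule.subset_span ⟨nprod k u v, m + n - k, by omega, rfl⟩

/-- For `m ≥ 0` the terms with `k > m + n ≥ m` carry the factor `C(m, k) = 0`. -/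
theorem apply_mem_chatPos
    (hB : ∀ (u v : C) (m n : ℤ), B (elt C T u m) (elt C T v n)
      = ∑ k ∈ Finset.range (Nb u v), cchoose m k • elt C T (nprod k u v) (m + n - (k : ℤ))) :
    ∀ x ∈ ChatPos C T, ∀ y ∈ ChatPos C T, B x y ∈ ChatPos C T := by
  refine Submodule.apply_mem_of_forall_mem_span ?_
  rintro _ ⟨u, m, hm, rfl⟩ _ ⟨v, n, hn, rfl⟩
  rw [hB]
  refine Submodule.sum_mem _ fun k _ => ?_
  by_cases hk : (k : ℤ) ≤ m + n
  · exact Submodule.smul_mem _ _ <|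
      Submodule.subset_span ⟨nprod k u v, m + n - k, by omega, rfl⟩
  · rw [cchoose_eq_zero_of_lt hm (by omega), zero_smul]
    exact zero_mem _

end Bracket

theorem stmt17 (nprod : ℕ → C → C → C) (Nb : C → C → ℕ)
    (B : Chat C T →ₗ[ℂ] Chat C T →ₗ[ℂ] Chat C T)
    (hB : ∀ (u v : C) (m n : ℤ),
      B (elt C T u m) (elt C T v n)
        = ∑ k ∈ Finset.range (Nb u v),
            cchoose m k • elt C T (nprod k u v) (m + n - (k : ℤ))) :
    (∀ x ∈ ChatNeg C T, ∀ y ∈ ChatNeg C T, B x y ∈ ChatNeg C T) ∧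
    (∀ x ∈ ChatPos C T, ∀ y ∈ ChatPos C T, B x y ∈ ChatPos C T) ∧
    ChatNeg C T ⊔ ChatPos C T = ⊤ ∧
    ChatNeg C T ⊓ ChatPos C T = ⊥ :=
  ⟨apply_mem_chatNeg hB, apply_mem_chatPos hB, chatNeg_sup_chatPos C T,
    (disjoint_chatNeg_chatPos C T).eq_bot⟩

end
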